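/- arXiv:2308.09420 — 4 statements merged into one kernel-verified Lean document; each statement's English description precedes it below -/
import Mathlib

section
/- Let β : ℝ → ℝ be continuous and nondecreasing with β(0) = 0, and let ε > 0. Then β̃_ε(0) = 0, and for all r, t ∈ ℝ one has ε·|r - t| ≤ |β̃_ε(r) - β̃_ε(t)| ≤ (ε + 2/ε)·|r - t|. Moreover, β̃_ε is a strictly increasing bijection from ℝ onto ℝ whose inverse is Lipschitz continuous with Lipschitz constant 1/ε. -/
theorem stmt_9 (β : ℝ → ℝ) (hβc : Continuous β) (hβm : Monotone β) (hβ0 : β 0 = 0)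
    (ε : ℝ) (hε : 0 < ε)
    (g : ℝ → ℝ) (hg : Function.RightInverse g (fun r => r + ε * β r))
    (hg' : Function.LeftInverse g (fun r => r + ε * β r))
    (βt : ℝ → ℝ) (hβt : ∀ r, βt r = β (g r) + ε * r) :
    βt 0 = 0 ∧
    (∀ r t : ℝ, ε * |r - t| ≤ |βt r - βt t| ∧ |βt r - βt t| ≤ (ε + 2 / ε) * |r - t|) ∧
    StrictMono βt ∧ Function.Bijective βt ∧
    (∀ r t : ℝ, |Function.invFun βt r - Function.invFun βt t| ≤ (1 / ε) * |r - t|) := by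
  have hmono : StrictMono (fun r => r + ε * β r) := by
    intro a b hab
    have := hβm hab.le
    dsimp
    nlinarith
  have hg0 : g 0 = 0 := by
    have h0 : (fun r => r + ε * β r) 0 = 0 := by simp [hβ0]
    calc g 0 = g ((fun r => r + ε * β r) 0) := by rw [h0]
    _ = 0 := hg' 0
  have hβg : ∀ r, ε * β (g r) = r - g r := by
    intro r
    have := hg r
    dsimp at this
    linarith
  have hβt0 : βt 0 = 0 := by rw [hβt, hg0, hβ0]; ring
  have hgmono : Monotone g := by
    intro a b hab
    by_contra hlt
    push_neg at hlt
    have h2 := hmono hlt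
    rw [hg a, hg b] at h2
    exact absurd hab (not_le.mpr h2)
  have hglip : ∀ a b : ℝ, a ≤ b → g b - g a ≤ b - a := by
    intro a b hab
    have h1 := hβg a
    have h2 := hβg b
    have h3 : β (g a) ≤ β (g b) := hβm (hgmono hab)
    nlinarith
  have key : ∀ a b : ℝ, a ≤ b →
      ε * (b - a) ≤ βt b - βt a ∧ βt b - βt a ≤ (ε + 2 / ε) * (b - a) := by
    intro a b hab
    have h1 := hβg a
    have h2 := hβg b
    have h3 : β (g a) ≤ β (g b) := hβm (hgmono hab)
    have h4 := hglip a b hab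
    have h5 : (0:ℝ) < 2 / ε := by positivity
    rw [hβt a, hβt b]
    constructor
    · nlinarith
    · have : β (g b) - β (g a) ≤ (b - a) / ε := by
        rw [le_div_iff₀ hε]
        have h7 : g a ≤ g b := hgmono hab
        nlinarith
      have h6 : (b - a) / ε ≤ (2 / ε) * (b - a) := by
        rw [div_eq_mul_inv, div_eq_mul_inv]
        nlinarith [mul_nonneg (sub_nonneg.mpr hab) (le_of_lt (inv_pos.mpr hε))]
      nlinarith
  have hsm : StrictMono βt := by
    intro a b hab
    have := (key a b hab.le).1
    nlinarith
  -- continuity of g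
  have hglip' : LipschitzWith 1 g := by
    apply LipschitzWith.of_dist_le_mul
    intro a b
    rw [Real.dist_eq, Real.dist_eq, NNReal.coe_one, one_mul]
    rcases le_total a b with h | h
    · rw [abs_of_nonpos (by linarith [hgmono h] : g a - g b ≤ 0),
        abs_of_nonpos (by linarith : a - b ≤ 0)]
      linarith [hglip a b h]
    · rw [abs_of_nonneg (by linarith [hgmono h] : 0 ≤ g a - g b),
        abs_of_nonneg (by linarith : 0 ≤ a - b)]
      linarith [hglip b a h]
  have hβtc : Continuous βt := by
    have : βt = fun r => β (g r) + ε * r := funext hβt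
    rw [this]
    exact (hβc.comp hglip'.continuous).add (continuous_const.mul continuous_id)
  have htop : Filter.Tendsto βt Filter.atTop Filter.atTop := by
    apply Filter.tendsto_atTop_mono' _ _ (Filter.tendsto_id.const_mul_atTop hε)
    filter_upwards [Filter.eventually_ge_atTop (0:ℝ)] with r hr
    have := (key 0 r hr).1
    simp only [id]
    linarith [hβt0 ▸ this]
  have hbot : Filter.Tendsto βt Filter.atBot Filter.atBot := by
    apply Filter.tendsto_atBot_mono' _ _ (Filter.tendsto_id.const_mul_atBot hε)
    filter_upwards [Filter.eventually_le_atBot (0:ℝ)] with r hr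
    have := (key r 0 hr).1
    simp only [id]
    linarith [hβt0 ▸ this]
  have hsurj : Function.Surjective βt := hβtc.surjective htop hbot
  have hbij : Function.Bijective βt := ⟨hsm.injective, hsurj⟩
  have hbound : ∀ r t : ℝ, ε * |r - t| ≤ |βt r - βt t| ∧
      |βt r - βt t| ≤ (ε + 2 / ε) * |r - t| := by
    intro r t
    rcases le_total r t with h | h
    · obtain ⟨h1, h2⟩ := key r t h
      rw [abs_of_nonpos (by linarith : r - t ≤ 0),
        abs_of_nonpos (by nlinarith : βt r - βt t ≤ 0)]
      constructor <;> nlinarith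
    · obtain ⟨h1, h2⟩ := key t r h
      rw [abs_of_nonneg (by linarith : 0 ≤ r - t),
        abs_of_nonneg (by nlinarith : 0 ≤ βt r - βt t)]
      constructor <;> nlinarith
  refine ⟨hβt0, hbound, hsm, hbij, ?_⟩
  intro r t
  set a := Function.invFun βt r with ha
  set b := Function.invFun βt t with hb
  have hra : βt a = r := Function.invFun_eq (hsurj r)
  have hrb : βt b = t := Function.invFun_eq (hsurj t)
  have := (hbound a b).1
  rw [hra, hrb] at this
  calc |a - b| = (ε * |a - b|) * (1/ε) := by field_simp
  _ ≤ |r - t| * (1/ε) := by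
      apply mul_le_mul_of_nonneg_right this (by positivity)
  _ = 1 / ε * |r - t| := by ring
end

section
/- Let β : ℝ → ℝ be continuous and nondecreasing with β(0) = 0, let ε > 0, let μ be a measure on a measurable space, and let u, v be real-valued measurable functions with u, v ∈ L²(μ). Then β̃_ε ∘ u and β̃_ε ∘ v belong to L²(μ) and ∫ (β̃_ε(u) - β̃_ε(v))·(u - v) dμ ≥ ε·∫ (u - v)² dμ. -/
/-!
Write `h r = r + ε β r`, so that `g = h⁻¹`. For `a ≤ b` the identity
`b - a = (g b - g a) + ε (β (g b) - β (g a))` splits `b - a` into two nonnegative parts, hence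
`β ∘ g` is monotone and `(1/ε)`-Lipschitz and vanishes at `0`. Thus `β̃_ε = β ∘ g + ε id` has
linear growth, which keeps `L²` stable, and `(β̃_ε a - β̃_ε b)(a - b) ≥ ε (a - b)²` pointwise;
integrating the latter gives the inequality.
-/

open MeasureTheory

section Resolvent

variable {β g : ℝ → ℝ} {ε : ℝ}

theorem strictMono_add_mul (hβ : Monotone β) (hε : 0 ≤ ε) : StrictMono fun r => r + ε * β r :=
  strictMono_id.add_monotone (hβ.const_mul hε)

theorem monotone_of_rightInverse_add_mul (hβ : Monotone β) (hε : 0 ≤ ε)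
    (hg : Function.RightInverse g fun r => r + ε * β r) : Monotone g :=
  ((strictMono_add_mul hβ hε).orderIsoOfRightInverse _ g hg).symm.monotone

theorem eq_zero_of_rightInverse_add_mul (hβ : Monotone β) (hε : 0 ≤ ε) (hβ0 : β 0 = 0)
    (hg : Function.RightInverse g fun r => r + ε * β r) : g 0 = 0 :=
  (strictMono_add_mul hβ hε).injective <| by simpa [hβ0] using hg 0

theorem mul_abs_sub_comp_le (hβ : Monotone β) (hε : 0 ≤ ε)
    (hg : Function.RightInverse g fun r => r + ε * β r) (a b : ℝ) :
    ε * |β (g a) - β (g b)| ≤ |a - b| := by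
  have hga : g a + ε * β (g a) = a := hg a
  have hgb : g b + ε * β (g b) = b := hg b
  have hgm := monotone_of_rightInverse_add_mul hβ hε hg
  rcases le_total a b with hab | hba
  · have hβg : β (g a) ≤ β (g b) := hβ (hgm hab)
    rw [abs_of_nonpos (sub_nonpos.2 hβg), abs_of_nonpos (sub_nonpos.2 hab)]
    linarith [hgm hab]
  · have hβg : β (g b) ≤ β (g a) := hβ (hgm hba)
    rw [abs_of_nonneg (sub_nonneg.2 hβg), abs_of_nonneg (sub_nonneg.2 hba)]
    linarith [hgm hba]

theorem abs_comp_add_mul_le (hβ : Monotone β) (hε : 0 < ε) (hβ0 : β 0 = 0)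
    (hg : Function.RightInverse g fun r => r + ε * β r) (r : ℝ) :
    |β (g r) + ε * r| ≤ (ε⁻¹ + ε) * |r| := by
  have hlip := mul_abs_sub_comp_le hβ hε.le hg r 0
  rw [eq_zero_of_rightInverse_add_mul hβ hε.le hβ0 hg, hβ0, sub_zero, sub_zero] at hlip
  have hβg : |β (g r)| ≤ ε⁻¹ * |r| := by
    rw [inv_mul_eq_div, le_div_iff₀ hε, mul_comm]
    exact hlip
  calc |β (g r) + ε * r| ≤ |β (g r)| + |ε * r| := abs_add_le _ _
    _ = |β (g r)| + ε * |r| := by rw [abs_mul, abs_of_pos hε]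
    _ ≤ (ε⁻¹ + ε) * |r| := by linarith

end Resolvent

theorem mul_sq_sub_le_of_monotone {φ : ℝ → ℝ} (hφ : Monotone φ) (ε a b : ℝ) :
    ε * (a - b) ^ 2 ≤ (φ a + ε * a - (φ b + ε * b)) * (a - b) := by
  have := (hφ.monovary monotone_id).sub_mul_sub_nonneg a b
  simp only [id] at this
  nlinarith

section Lp

variable {α : Type*} [MeasurableSpace α] {μ : Measure α}

theorem MemLp.comp_of_abs_le_mul {p : ENNReal} {F : ℝ → ℝ} (hF : Measurable F) {C : ℝ}
    (hFC : ∀ r, |F r| ≤ C * |r|) {u : α → ℝ} (hu : MemLp u p μ) :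
    MemLp (fun x => F (u x)) p μ :=
  hu.of_le_mul (hF.comp_aemeasurable hu.aemeasurable).aestronglyMeasurable
    (.of_forall fun x => hFC (u x))

theorem mul_integral_sq_sub_le {F : ℝ → ℝ} {ε : ℝ}
    (hF : ∀ a b, ε * (a - b) ^ 2 ≤ (F a - F b) * (a - b)) {u v : α → ℝ}
    (hu : MemLp u 2 μ) (hv : MemLp v 2 μ)
    (hFu : MemLp (fun x => F (u x)) 2 μ) (hFv : MemLp (fun x => F (v x)) 2 μ) :
    ε * ∫ x, (u x - v x) ^ 2 ∂μ ≤ ∫ x, (F (u x) - F (v x)) * (u x - v x) ∂μ := by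
  rw [← integral_const_mul]
  exact integral_mono ((hu.sub hv).integrable_sq.const_mul ε)
    ((hFu.sub hFv).integrable_mul (hu.sub hv)) fun x => hF (u x) (v x)

end Lp

theorem stmt_10_general {α : Type*} [MeasurableSpace α] (μ : Measure α)
    (β : ℝ → ℝ) (hβm : Monotone β) (hβ0 : β 0 = 0)
    (ε : ℝ) (hε : 0 < ε)
    (g : ℝ → ℝ) (hg : Function.RightInverse g (fun r => r + ε * β r))
    (βt : ℝ → ℝ) (hβt : ∀ r, βt r = β (g r) + ε * r)
    (u v : α → ℝ)
    (hu2 : MemLp u 2 μ) (hv2 : MemLp v 2 μ) :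
    MemLp (fun x => βt (u x)) 2 μ ∧ MemLp (fun x => βt (v x)) 2 μ ∧
    ε * ∫ x, (u x - v x) ^ 2 ∂μ ≤ ∫ x, (βt (u x) - βt (v x)) * (u x - v x) ∂μ := by
  obtain rfl : βt = fun r => β (g r) + ε * r := funext hβt
  have hβg : Monotone (β ∘ g) := hβm.comp (monotone_of_rightInverse_add_mul hβm hε.le hg)
  have hmeas : Measurable fun r => β (g r) + ε * r :=
    hβg.measurable.add (measurable_const.mul measurable_id)
  have hmemLp {w : α → ℝ} (hw : MemLp w 2 μ) : MemLp (fun x => β (g (w x)) + ε * w x) 2 μ :=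
    MemLp.comp_of_abs_le_mul hmeas (abs_comp_add_mul_le hβm hε hβ0 hg) hw
  exact ⟨hmemLp hu2, hmemLp hv2, mul_integral_sq_sub_le (mul_sq_sub_le_of_monotone hβg ε)
    hu2 hv2 (hmemLp hu2) (hmemLp hv2)⟩

theorem stmt_10 {α : Type*} [MeasurableSpace α] (μ : Measure α)
    (β : ℝ → ℝ) (hβc : Continuous β) (hβm : Monotone β) (hβ0 : β 0 = 0)
    (ε : ℝ) (hε : 0 < ε)
    (g : ℝ → ℝ) (hg : Function.RightInverse g (fun r => r + ε * β r))
    (hg' : Function.LeftInverse g (fun r => r + ε * β r))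
    (βt : ℝ → ℝ) (hβt : ∀ r, βt r = β (g r) + ε * r)
    (u v : α → ℝ) (hu : Measurable u) (hv : Measurable v)
    (hu2 : MemLp u 2 μ) (hv2 : MemLp v 2 μ) :
    MemLp (fun x => βt (u x)) 2 μ ∧ MemLp (fun x => βt (v x)) 2 μ ∧
    ε * ∫ x, (u x - v x) ^ 2 ∂μ ≤ ∫ x, (βt (u x) - βt (v x)) * (u x - v x) ∂μ :=
  stmt_10_general μ β hβm hβ0 ε hε g hg βt hβt u v hu2 hv2
end

section
/- Let β : ℝ → ℝ be continuous and nondecreasing with β(0) = 0. Let r ∈ ℝ and let (r_ε)_{ε>0} be a family of reals with r_ε → r as ε → 0⁺. Then g_ε(r_ε) → r and β̃_ε(r_ε) → β(r) as ε → 0⁺. In particular, for every fixed r ∈ ℝ, g_ε(r) → r and β̃_ε(r) → β(r) as ε → 0⁺. -/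
open Filter

/-- The inverse `g_ε` of the strictly increasing bijection `h_ε(r) = r + ε β(r)`. -/
noncomputable def gEps (β : ℝ → ℝ) (ε : ℝ) : ℝ → ℝ :=
  Function.invFun (fun r => r + ε * β r)

/-- The approximation `β̃_ε(r) = β(g_ε(r)) + ε r`. -/
noncomputable def betaTilde (β : ℝ → ℝ) (ε : ℝ) (r : ℝ) : ℝ :=
  β (gEps β ε r) + ε * r

lemma gEps_eq (β : ℝ → ℝ) (hβc : Continuous β) (hβm : Monotone β) (hβ0 : β 0 = 0)
    {ε : ℝ} (hε : 0 < ε) (s : ℝ) :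
    gEps β ε s + ε * β (gEps β ε s) = s := by
  have hc : Continuous (fun r => r + ε * β r) := continuous_id.add (continuous_const.mul hβc)
  have htop : Tendsto (fun r => r + ε * β r) atTop atTop := by
    apply tendsto_atTop_mono' _ _ tendsto_id
    filter_upwards [eventually_ge_atTop (0 : ℝ)] with x hx
    have : (0:ℝ) ≤ β x := hβ0 ▸ hβm hx
    simp only [id]; nlinarith
  have hbot : Tendsto (fun r => r + ε * β r) atBot atBot := by
    apply tendsto_atBot_mono' _ _ tendsto_id
    filter_upwards [eventually_le_atBot (0 : ℝ)] with x hx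
    have : β x ≤ 0 := hβ0 ▸ hβm hx
    simp only [id]; nlinarith
  have hsurj : Function.Surjective (fun r => r + ε * β r) :=
    hc.surjective htop hbot
  exact Function.invFun_eq (hsurj s)

lemma gEps_bounds (β : ℝ → ℝ) (hβc : Continuous β) (hβm : Monotone β) (hβ0 : β 0 = 0)
    {ε : ℝ} (hε : 0 < ε) (s : ℝ) :
    min s 0 ≤ gEps β ε s ∧ gEps β ε s ≤ max s 0 := by
  have heq := gEps_eq β hβc hβm hβ0 hε s
  set g := gEps β ε s with hg
  constructor
  · by_contra h
    push_neg at h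
    have hg0 : g < 0 := lt_of_lt_of_le h (min_le_right s 0)
    have hgs : g < s := lt_of_lt_of_le h (min_le_left s 0)
    have : β g ≤ 0 := hβ0 ▸ hβm hg0.le
    nlinarith
  · by_contra h
    push_neg at h
    have hg0 : 0 < g := lt_of_le_of_lt (le_max_right s 0) h
    have hgs : s < g := lt_of_le_of_lt (le_max_left s 0) h
    have : 0 ≤ β g := hβ0 ▸ hβm hg0.le
    nlinarith

lemma gEps_tendsto (β : ℝ → ℝ) (hβc : Continuous β) (hβm : Monotone β) (hβ0 : β 0 = 0)
    (r : ℝ) (rε : ℝ → ℝ)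
    (hr : Tendsto rε (nhdsWithin 0 (Set.Ioi 0)) (nhds r)) :
    Tendsto (fun ε => gEps β ε (rε ε)) (nhdsWithin 0 (Set.Ioi 0)) (nhds r) := by
  set M := |r| + 1 with hM
  set C := max (β M) (-(β (-M))) with hC
  have hdiff : Tendsto (fun ε => gEps β ε (rε ε) - rε ε) (nhdsWithin 0 (Set.Ioi 0)) (nhds 0) := by
    apply squeeze_zero_norm' (a := fun ε => ε * C)
    · have h1 : ∀ᶠ ε in nhdsWithin 0 (Set.Ioi 0), |rε ε - r| < 1 := by
        have := (Metric.tendsto_nhds.mp hr) 1 one_pos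
        simpa [Real.dist_eq] using this
      filter_upwards [h1, self_mem_nhdsWithin] with ε h1 hε
      have hε : (0:ℝ) < ε := hε
      have heq := gEps_eq β hβc hβm hβ0 hε (rε ε)
      have hb := gEps_bounds β hβc hβm hβ0 hε (rε ε)
      set g := gEps β ε (rε ε) with hg
      have hrεM : |rε ε| ≤ M := by
        have := abs_sub_abs_le_abs_sub (rε ε) r
        rw [hM]; linarith
      have hgM : |g| ≤ M := by
        rcases abs_le.mp hrεM with ⟨h1', h2'⟩
        rcases hb with ⟨hlo, hhi⟩
        rw [abs_le]
        constructor
        · calc -M ≤ min (rε ε) 0 := le_min h1' (by rw [hM]; linarith [abs_nonneg r])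
            _ ≤ g := hlo
        · calc g ≤ max (rε ε) 0 := hhi
            _ ≤ M := max_le h2' (by rw [hM]; linarith [abs_nonneg r])
      have hβgC : |β g| ≤ C := by
        rcases abs_le.mp hgM with ⟨h1', h2'⟩
        rw [abs_le]
        have hCge : -(β (-M)) ≤ C := by rw [hC]; exact le_max_right _ _
        have hCge' : β M ≤ C := by rw [hC]; exact le_max_left _ _
        exact ⟨by have := hβm h1'; linarith, by have := hβm h2'; linarith⟩
      have : g - rε ε = -(ε * β g) := by linarith
      rw [Real.norm_eq_abs, this, abs_neg, abs_mul, abs_of_pos hε]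
      exact mul_le_mul_of_nonneg_left hβgC hε.le
    · have : Tendsto (fun ε : ℝ => ε * C) (nhds 0) (nhds (0 * C)) :=
        (continuous_id.mul continuous_const).tendsto 0
      rw [zero_mul] at this
      exact this.mono_left nhdsWithin_le_nhds
  have := hdiff.add hr
  simpa using this

theorem stmt_12 (β : ℝ → ℝ) (hβc : Continuous β) (hβm : Monotone β) (hβ0 : β 0 = 0)
    (r : ℝ) (rε : ℝ → ℝ)
    (hr : Tendsto rε (nhdsWithin 0 (Set.Ioi 0)) (nhds r)) :
    Tendsto (fun ε => gEps β ε (rε ε)) (nhdsWithin 0 (Set.Ioi 0)) (nhds r) ∧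
    Tendsto (fun ε => betaTilde β ε (rε ε)) (nhdsWithin 0 (Set.Ioi 0)) (nhds (β r)) ∧
    (∀ s : ℝ, Tendsto (fun ε => gEps β ε s) (nhdsWithin 0 (Set.Ioi 0)) (nhds s)) ∧
    (∀ s : ℝ, Tendsto (fun ε => betaTilde β ε s) (nhdsWithin 0 (Set.Ioi 0)) (nhds (β s))) := by
  have key : ∀ (r : ℝ) (rε : ℝ → ℝ),
      Tendsto rε (nhdsWithin 0 (Set.Ioi 0)) (nhds r) →
      Tendsto (fun ε => betaTilde β ε (rε ε)) (nhdsWithin 0 (Set.Ioi 0)) (nhds (β r)) := by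
    intro r rε hr
    have hg := gEps_tendsto β hβc hβm hβ0 r rε hr
    have h1 : Tendsto (fun ε => β (gEps β ε (rε ε))) (nhdsWithin 0 (Set.Ioi 0)) (nhds (β r)) :=
      (hβc.tendsto r).comp hg
    have h2 : Tendsto (fun ε => ε * rε ε) (nhdsWithin 0 (Set.Ioi 0)) (nhds 0) := by
      have := (tendsto_id.mono_left (nhdsWithin_le_nhds (s := Set.Ioi (0:ℝ)))).mul hr
      simpa using this
    have := h1.add h2
    simpa [betaTilde] using this
  exact ⟨gEps_tendsto β hβc hβm hβ0 r rε hr, key r rε hr,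
    fun s => gEps_tendsto β hβc hβm hβ0 s (fun _ => s) tendsto_const_nhds,
    fun s => key s (fun _ => s) tendsto_const_nhds⟩
end

section
/- Let β : ℝ → ℝ be continuous and nondecreasing with β(0) = 0, let ε > 0, let M > 0, and suppose β is Lipschitz continuous with constant K on the interval [-M, M]. Then |β̃_ε(r)| ≤ (ε + K)·|r| for all r ∈ ℝ with |r| ≤ M. -/
/-! The bound rests on `|g_ε r| ≤ |r|`: since `β` has the sign of its argument, so does
`ε β s`, hence `|s| ≤ |s + ε β s|`; taking `s = g_ε r` then leaves only the Lipschitz bound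
`|β s| ≤ K |s|` at the point `0`. -/

section

variable {β : ℝ → ℝ} {ε : ℝ}

lemma mul_apply_nonneg_of_monotone (hβm : Monotone β) (hβ0 : β 0 = 0) (s : ℝ) :
    0 ≤ s * β s := by
  rcases le_total 0 s with hs | hs
  · exact mul_nonneg hs (hβ0 ▸ hβm hs)
  · exact mul_nonneg_of_nonpos_of_nonpos hs (hβ0 ▸ hβm hs)

lemma abs_le_abs_add_mul_apply (hβm : Monotone β) (hβ0 : β 0 = 0) (hε : 0 ≤ ε) (s : ℝ) :
    |s| ≤ |s + ε * β s| := by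
  have hsign := mul_apply_nonneg_of_monotone hβm hβ0 s
  rw [← sq_le_sq]
  nlinarith [mul_nonneg hε hsign, sq_nonneg (ε * β s)]

lemma surjective_add_mul_apply (hβc : Continuous β) (hβm : Monotone β) (hβ0 : β 0 = 0)
    (hε : 0 ≤ ε) : Function.Surjective (fun s => s + ε * β s) := by
  refine Continuous.surjective (by fun_prop) ?_ ?_
  · refine Filter.tendsto_atTop_mono' _ ?_ Filter.tendsto_id
    filter_upwards [Filter.eventually_ge_atTop 0] with s hs
    exact le_add_of_nonneg_right (mul_nonneg hε (hβ0 ▸ hβm hs))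
  · refine Filter.tendsto_atBot_mono' _ ?_ Filter.tendsto_id
    filter_upwards [Filter.eventually_le_atBot 0] with s hs
    exact add_le_of_nonpos_right (mul_nonpos_of_nonneg_of_nonpos hε (hβ0 ▸ hβm hs))

lemma gEps_add_mul_apply_gEps (hβc : Continuous β) (hβm : Monotone β) (hβ0 : β 0 = 0)
    (hε : 0 ≤ ε) (r : ℝ) : gEps β ε r + ε * β (gEps β ε r) = r :=
  Function.invFun_eq (surjective_add_mul_apply hβc hβm hβ0 hε r)

lemma abs_gEps_le (hβc : Continuous β) (hβm : Monotone β) (hβ0 : β 0 = 0) (hε : 0 ≤ ε)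
    (r : ℝ) : |gEps β ε r| ≤ |r| := by
  conv_rhs => rw [← gEps_add_mul_apply_gEps hβc hβm hβ0 hε r]
  exact abs_le_abs_add_mul_apply hβm hβ0 hε _

end

theorem stmt_16_general (β : ℝ → ℝ) (hβc : Continuous β) (hβm : Monotone β) (hβ0 : β 0 = 0)
    (ε : ℝ) (hε : 0 < ε) (M : ℝ) (K : ℝ) (hK : 0 ≤ K)
    (hLip : ∀ r t : ℝ, r ∈ Set.Icc (-M) M → t ∈ Set.Icc (-M) M →
      |β r - β t| ≤ K * |r - t|) :
    ∀ r : ℝ, |r| ≤ M → |betaTilde β ε r| ≤ (ε + K) * |r| := by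
  intro r hr
  set s := gEps β ε r
  have hsr : |s| ≤ |r| := abs_gEps_le hβc hβm hβ0 hε.le r
  have hs : s ∈ Set.Icc (-M) M := abs_le.mp (hsr.trans hr)
  have h0 : (0 : ℝ) ∈ Set.Icc (-M) M := ⟨by linarith [abs_nonneg r], (abs_nonneg r).trans hr⟩
  have hβs : |β s| ≤ K * |r| := by
    have := hLip s 0 hs h0
    rw [hβ0, sub_zero, sub_zero] at this
    exact this.trans (mul_le_mul_of_nonneg_left hsr hK)
  calc |betaTilde β ε r| ≤ |β s| + |ε * r| := abs_add_le _ _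
    _ ≤ K * |r| + ε * |r| := by rw [abs_mul, abs_of_pos hε]; gcongr
    _ = (ε + K) * |r| := by ring

theorem stmt_16 (β : ℝ → ℝ) (hβc : Continuous β) (hβm : Monotone β) (hβ0 : β 0 = 0)
    (ε : ℝ) (hε : 0 < ε) (M : ℝ) (hM : 0 < M) (K : ℝ) (hK : 0 ≤ K)
    (hLip : ∀ r t : ℝ, r ∈ Set.Icc (-M) M → t ∈ Set.Icc (-M) M →
      |β r - β t| ≤ K * |r - t|) :
    ∀ r : ℝ, |r| ≤ M → |betaTilde β ε r| ≤ (ε + K) * |r| :=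
  stmt_16_general β hβc hβm hβ0 ε hε M K hK hLip
end
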